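/- Let d be a positive integer, let L̄, L¹, …, L^N ∈ ℝ^{d×d}, and let λ₁, …, λ_N > 0 with ∑_{i=1}^N λ_i = 1. Set Σ̄ := L̄ L̄ᵀ and Σ^i := L^i (L^i)ᵀ, and assume Σ̄ and all Σ^i are positive definite. If L̄ satisfies the fixed-point equation L̄ = ∑_{i=1}^N λ_i L^i O_i for some O_i ∈ argmin_{O ∈ O(d)} ‖L̄ − L^i O‖_F², then the covariance Σ̄ satisfies the Agueh–Carlier fixed-point equation Σ̄ = ∑_{i=1}^N λ_i (Σ̄^{1/2} Σ^i Σ̄^{1/2})^{1/2}. -/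

import Mathlib

open Matrix

/-- Squared Frobenius norm of a real matrix: `‖A‖_F² = tr(Aᵀ A)`. -/
noncomputable def frobSq {m n : Type*} [Fintype m] [Fintype n] (A : Matrix m n ℝ) : ℝ :=
  Matrix.trace (Aᵀ * A)

/-- `O ∈ O(d)`: a real orthogonal matrix. -/
def IsOrth {d : ℕ} (O : Matrix (Fin d) (Fin d) ℝ) : Prop :=
  O * Oᵀ = 1 ∧ Oᵀ * O = 1

/-- `L ∈ 𝕃`: block-lower triangular w.r.t. `T` blocks of size `d`
(indices are pairs `(i, t)` with `i : Fin d` the within-block index and `t : Fin T`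
the block index); the block `L_{t,s}` vanishes for `t < s`. -/
def BlockLT {d T : ℕ} (L : Matrix (Fin d × Fin T) (Fin d × Fin T) ℝ) : Prop :=
  ∀ p q : Fin d × Fin T, p.2 < q.2 → L p q = 0

/-- `O ∈ 𝕆`: block-diagonal with orthogonal `d × d` diagonal blocks. -/
def BlockOrth {d T : ℕ} (O : Matrix (Fin d × Fin T) (Fin d × Fin T) ℝ) : Prop :=
  ∃ f : Fin T → Matrix (Fin d) (Fin d) ℝ, (∀ t, IsOrth (f t)) ∧ O = Matrix.blockDiagonal f

/-- Truncated `t`-th column `L̃_t ∈ ℝ^{(T−t)d×d}` (0-based `t`): the rows of the `t`-th block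
column of `L` from block row `t` on. -/
def truncCol {d T : ℕ} (L : Matrix (Fin d × Fin T) (Fin d × Fin T) ℝ) (t : Fin T) :
    Matrix (Fin (T - t.val) × Fin d) (Fin d) ℝ :=
  fun p j => L (p.2, ⟨t.val + p.1.val, by have := p.1.isLt; omega⟩) (j, t)

/-- Column covariance `Σ̃_t^L = L̃_t L̃_tᵀ`. -/
noncomputable def colCov {d T : ℕ} (L : Matrix (Fin d × Fin T) (Fin d × Fin T) ℝ) (t : Fin T) :
    Matrix (Fin (T - t.val) × Fin d) (Fin (T - t.val) × Fin d) ℝ :=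
  truncCol L t * (truncCol L t)ᵀ

/-- The positive semidefinite square root of a PSD matrix (junk value `0` otherwise). -/
noncomputable def sqrtPSD {n : Type*} [Fintype n] [DecidableEq n] (P : Matrix n n ℝ) :
    Matrix n n ℝ :=
  by classical exact if h : P.PosSemidef then ((h.1.eigenvectorUnitary : Matrix n n ℝ) *
                       diagonal ((↑) ∘ Real.sqrt ∘ h.1.eigenvalues) *
                       (star h.1.eigenvectorUnitary : Matrix n n ℝ))
                     else 0

/-- The Bures–Wasserstein distance between (PSD) matrices. -/
noncomputable def dBW {n : Type*} [Fintype n] [DecidableEq n] (S1 S2 : Matrix n n ℝ) : ℝ :=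
  Real.sqrt (Matrix.trace S1 + Matrix.trace S2 -
    2 * Matrix.trace (sqrtPSD (sqrtPSD S2 * S1 * sqrtPSD S2)))


section Stmt16Aux

noncomputable def Matrix.PosSemidef.sqrt {n : Type*} [Fintype n] [DecidableEq n]
    {P : Matrix n n ℝ} (h : P.PosSemidef) : Matrix n n ℝ :=
  (h.1.eigenvectorUnitary : Matrix n n ℝ) *
    diagonal ((↑) ∘ Real.sqrt ∘ h.1.eigenvalues) *
    (star h.1.eigenvectorUnitary : Matrix n n ℝ)

open scoped MatrixOrder in
lemma Matrix.PosSemidef.sqrt_eq_cfcSqrt {n : Type*} [Fintype n] [DecidableEq n]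
    {P : Matrix n n ℝ} (h : P.PosSemidef) : h.sqrt = CFC.sqrt P := by
  rw [CFC.sqrt_eq_cfc, cfc_nnreal_eq_real _ P h.nonneg, h.1.cfc_eq, IsHermitian.cfc,
    Unitary.conjStarAlgAut_apply]
  unfold Matrix.PosSemidef.sqrt
  congr 3
  funext i
  simp [Real.coe_sqrt, Real.coe_toNNReal', max_eq_left (h.eigenvalues_nonneg i)]

open scoped MatrixOrder in
lemma Matrix.PosSemidef.sqrt_mul_self {n : Type*} [Fintype n] [DecidableEq n]
    {P : Matrix n n ℝ} (h : P.PosSemidef) : h.sqrt * h.sqrt = P := by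
  rw [h.sqrt_eq_cfcSqrt]; exact CFC.sqrt_mul_sqrt_self P h.nonneg

open scoped MatrixOrder in
lemma Matrix.PosSemidef.posSemidef_sqrt {n : Type*} [Fintype n] [DecidableEq n]
    {P : Matrix n n ℝ} (h : P.PosSemidef) : h.sqrt.PosSemidef := by
  rw [h.sqrt_eq_cfcSqrt]; exact (CFC.sqrt_nonneg P).posSemidef

open scoped MatrixOrder in
lemma Matrix.PosSemidef.eq_sqrt_of_sq_eq {n : Type*} [Fintype n] [DecidableEq n]
    {A B : Matrix n n ℝ} (hA : A.PosSemidef) (hB : B.PosSemidef) (hAB : A ^ 2 = B) :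
    A = hB.sqrt := by
  rw [hB.sqrt_eq_cfcSqrt, eq_comm, CFC.sqrt_eq_iff _ _ hB.nonneg hA.nonneg, ← sq]; exact hAB

lemma realCT {m n : Type*} (A : Matrix m n ℝ) : Aᴴ = Aᵀ :=
  Matrix.conjTranspose_eq_transpose_of_trivial A

lemma trace_tt_nonneg {n : Type*} [Fintype n] (X : Matrix n n ℝ) :
    0 ≤ Matrix.trace (Xᵀ * X) := by
  have h : Matrix.trace (Xᵀ * X) = ∑ j, ∑ i, (X i j)^2 := by
    simp [Matrix.trace, Matrix.diag, Matrix.mul_apply, sq]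
  rw [h]; positivity

lemma eq_zero_of_trace_tt {n : Type*} [Fintype n] (X : Matrix n n ℝ)
    (h : Matrix.trace (Xᵀ * X) = 0) : X = 0 := by
  have h' : ∑ j, ∑ i, (X i j)^2 = 0 := by
    rw [← h]; simp [Matrix.trace, Matrix.diag, Matrix.mul_apply, sq]
  ext i j
  have h1 := (Finset.sum_eq_zero_iff_of_nonneg (fun j _ => Finset.sum_nonneg
    (fun i _ => sq_nonneg (X i j)))).mp h' j (Finset.mem_univ j)
  have h2 := (Finset.sum_eq_zero_iff_of_nonneg (fun i _ => sq_nonneg (X i j))).mp h1 i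
    (Finset.mem_univ i)
  simpa using pow_eq_zero_iff (n := 2) (by norm_num) |>.mp h2

lemma orth_eq_one {n : Type*} [Fintype n] [DecidableEq n] {R P : Matrix n n ℝ}
    (hR1 : R * Rᵀ = 1) (hP : P.PosSemidef) (hPdet : IsUnit P.det)
    (htr : Matrix.trace P ≤ Matrix.trace (R * P)) : R = 1 := by
  set Q := hP.sqrt with hQdef
  have hQQ : Q * Q = P := hP.sqrt_mul_self
  have hQsym : Qᵀ = Q := by
    have := hP.posSemidef_sqrt.isHermitian
    rwa [Matrix.IsHermitian, realCT] at this
  have hQdet : IsUnit Q.det := by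
    have h2 : Q.det * Q.det = P.det := by rw [← Matrix.det_mul, hQQ]
    exact isUnit_of_mul_isUnit_left (h2 ▸ hPdet)
  have hPsym : Pᵀ = P := by
    have := hP.isHermitian; rwa [Matrix.IsHermitian, realCT] at this
  set X := (1 - Rᵀ) * Q with hX
  have hXt : Xᵀ = Q * (1 - R) := by
    rw [hX, Matrix.transpose_mul, hQsym, Matrix.transpose_sub, Matrix.transpose_one,
      Matrix.transpose_transpose]
  have e1 : Xᵀ * X = Q*Q - Q*(Rᵀ*Q) - Q*(R*Q) + Q*(R*(Rᵀ*Q)) := by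
    rw [hXt, hX]; noncomm_ring
  have t1 : Matrix.trace (Q*(R*Q)) = Matrix.trace (R*P) := by
    rw [Matrix.trace_mul_comm Q (R*Q), Matrix.mul_assoc, hQQ]
  have t2 : Matrix.trace (Q*(Rᵀ*Q)) = Matrix.trace (R*P) := by
    rw [Matrix.trace_mul_comm Q (Rᵀ*Q), Matrix.mul_assoc, hQQ, ← Matrix.trace_transpose,
      Matrix.transpose_mul, hPsym, Matrix.transpose_transpose, Matrix.trace_mul_comm]
  have t3 : Matrix.trace (Q*(R*(Rᵀ*Q))) = Matrix.trace P := by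
    rw [← Matrix.mul_assoc R, hR1, Matrix.one_mul, hQQ]
  have key : Matrix.trace (Xᵀ * X) = 2 * (Matrix.trace P - Matrix.trace (R * P)) := by
    rw [e1, Matrix.trace_add, Matrix.trace_sub, Matrix.trace_sub, hQQ, t1, t2, t3]; ring
  have hz : Matrix.trace (Xᵀ * X) = 0 :=
    le_antisymm (by rw [key]; linarith) (trace_tt_nonneg X)
  have hX0 : X = 0 := eq_zero_of_trace_tt X hz
  have hC : (1 - Rᵀ) = 0 := by
    have := congrArg (fun Y => Y * Q⁻¹) hX0
    simpa [hX, Matrix.mul_assoc, Matrix.mul_nonsing_inv Q hQdet] using this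
  have : Rᵀ = 1 := by
    have := sub_eq_zero.mp hC; exact this.symm
  calc R = Rᵀᵀ := (Matrix.transpose_transpose R).symm
    _ = 1 := by rw [this, Matrix.transpose_one]

lemma frob_expand {d : ℕ} (Lb A Q : Matrix (Fin d) (Fin d) ℝ) (hQ : IsOrth Q) :
    frobSq (Lb - A * Q) =
      Matrix.trace (Lbᵀ * Lb) + Matrix.trace (Aᵀ * A)
        - 2 * Matrix.trace (Qᵀ * (Aᵀ * Lb)) := by
  unfold frobSq
  have e : (Lb - A*Q)ᵀ * (Lb - A*Q) =
      Lbᵀ*Lb - Lbᵀ*(A*Q) - Qᵀ*(Aᵀ*Lb) + Qᵀ*(Aᵀ*(A*Q)) := by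
    rw [Matrix.transpose_sub, Matrix.transpose_mul]; noncomm_ring
  rw [e, Matrix.trace_add, Matrix.trace_sub, Matrix.trace_sub]
  have t1 : Matrix.trace (Lbᵀ*(A*Q)) = Matrix.trace (Qᵀ*(Aᵀ*Lb)) := by
    rw [← Matrix.trace_transpose (Lbᵀ*(A*Q))]
    simp [Matrix.transpose_mul, Matrix.mul_assoc]
  have t3 : Matrix.trace (Qᵀ*(Aᵀ*(A*Q))) = Matrix.trace (Aᵀ*A) := by
    rw [Matrix.trace_mul_comm]
    rw [show Aᵀ*(A*Q)*Qᵀ = Aᵀ*A*(Q*Qᵀ) by noncomm_ring, hQ.1, Matrix.mul_one]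
  rw [t1, t3]; ring

lemma procrustes_psd {d : ℕ} (Lb A Oi : Matrix (Fin d) (Fin d) ℝ)
    (hLb : IsUnit Lb.det) (hA : IsUnit A.det) (hOi : IsOrth Oi)
    (hmin : ∀ Q, IsOrth Q → frobSq (Lb - A * Oi) ≤ frobSq (Lb - A * Q)) :
    ((A * Oi)ᵀ * Lb).PosSemidef := by
  set M := Aᵀ * Lb with hM
  have hMdet : IsUnit M.det := by
    rw [hM, Matrix.det_mul, Matrix.det_transpose]; exact hA.mul hLb
  have hMtM : (Mᵀ * M).PosSemidef := by
    have := Matrix.posSemidef_conjTranspose_mul_self M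
    rwa [realCT] at this
  set P := hMtM.sqrt with hPdef
  have hPP : P * P = Mᵀ * M := hMtM.sqrt_mul_self
  have hPpsd : P.PosSemidef := hMtM.posSemidef_sqrt
  have hPsym : Pᵀ = P := by
    have := hPpsd.isHermitian; rwa [Matrix.IsHermitian, realCT] at this
  have hPdet : IsUnit P.det := by
    have h2 : P.det * P.det = Mᵀ.det * M.det := by
      rw [← Matrix.det_mul, ← Matrix.det_mul, hPP]
    refine isUnit_of_mul_isUnit_left (y := P.det) ?_
    rw [h2, Matrix.det_transpose]; exact hMdet.mul hMdet
  have hPinv : P * P⁻¹ = 1 := Matrix.mul_nonsing_inv _ hPdet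
  have hPinv' : P⁻¹ * P = 1 := Matrix.nonsing_inv_mul _ hPdet
  have hPinvsym : (P⁻¹)ᵀ = P⁻¹ := by rw [Matrix.transpose_nonsing_inv, hPsym]
  set W := M * P⁻¹ with hW
  have hWP : W * P = M := by rw [hW, Matrix.mul_assoc, hPinv', Matrix.mul_one]
  have hWW : Wᵀ * W = 1 := by
    rw [hW, Matrix.transpose_mul, hPinvsym]
    calc P⁻¹ * Mᵀ * (M * P⁻¹) = P⁻¹ * ((Mᵀ * M) * P⁻¹) := by
          simp only [Matrix.mul_assoc]
      _ = P⁻¹ * ((P * P) * P⁻¹) := by rw [hPP]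
      _ = (P⁻¹ * P) * (P * P⁻¹) := by simp only [Matrix.mul_assoc]
      _ = 1 := by rw [hPinv', hPinv, Matrix.one_mul]
  have hWorth : IsOrth W := ⟨mul_eq_one_comm.mp hWW, hWW⟩
  have hineq := hmin W hWorth
  rw [frob_expand Lb A Oi hOi, frob_expand Lb A W hWorth] at hineq
  have htr : Matrix.trace (Wᵀ * M) ≤ Matrix.trace (Oiᵀ * M) := by
    rw [hM]; linarith
  set R := Oiᵀ * W with hR
  have hRR : R * Rᵀ = 1 := by
    rw [hR, Matrix.transpose_mul, Matrix.transpose_transpose]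
    calc Oiᵀ * W * (Wᵀ * Oi) = Oiᵀ * ((W * Wᵀ) * Oi) := by
          simp only [Matrix.mul_assoc]
      _ = 1 := by rw [mul_eq_one_comm.mp hWW, Matrix.one_mul, hOi.2]
  have htrW : Matrix.trace (Wᵀ * M) = Matrix.trace P := by
    rw [← hWP, ← Matrix.mul_assoc, hWW, Matrix.one_mul]
  have htrO : Matrix.trace (Oiᵀ * M) = Matrix.trace (R * P) := by
    have : Oiᵀ * M = R * P := by
      rw [← hWP, hR]; simp only [Matrix.mul_assoc]
    rw [this]
  have hR1 : R = 1 := orth_eq_one hRR hPpsd hPdet (by rw [← htrW, ← htrO]; exact htr)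
  have hfin : (A * Oi)ᵀ * Lb = P := by
    have e1 : (A * Oi)ᵀ * Lb = Oiᵀ * M := by
      rw [hM, Matrix.transpose_mul]; simp only [Matrix.mul_assoc]
    have e2 : Oiᵀ * M = R * P := by
      rw [← hWP, hR]; simp only [Matrix.mul_assoc]
    rw [e1, e2, hR1, Matrix.one_mul]
  rw [hfin]; exact hPpsd

end Stmt16Aux

/-- One-period case `T = 1`: if `Σ̄ = L̄L̄ᵀ` and the `Σⁱ = Lⁱ(Lⁱ)ᵀ` are
positive definite and `L̄ = ∑ᵢ λᵢ LⁱOᵢ` for Procrustes optimizers `Oᵢ`, then `Σ̄` satisfies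
the Agueh–Carlier fixed-point equation `Σ̄ = ∑ᵢ λᵢ (Σ̄^{1/2} Σⁱ Σ̄^{1/2})^{1/2}`. -/
theorem stmt16 (d N : ℕ) (hd : 0 < d)
    (Lbar : Matrix (Fin d) (Fin d) ℝ) (L : Fin N → Matrix (Fin d) (Fin d) ℝ)
    (lam : Fin N → ℝ) (hlam : ∀ i, 0 < lam i) (hsum : ∑ i, lam i = 1)
    (hSbar : (Lbar * Lbarᵀ).PosDef) (hS : ∀ i, (L i * (L i)ᵀ).PosDef)
    (O : Fin N → Matrix (Fin d) (Fin d) ℝ)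
    (hO : ∀ i, IsOrth (O i) ∧
      ∀ Q, IsOrth Q → frobSq (Lbar - L i * O i) ≤ frobSq (Lbar - L i * Q))
    (hfix : Lbar = ∑ i, lam i • (L i * O i)) :
    Lbar * Lbarᵀ = ∑ i, lam i •
      sqrtPSD (sqrtPSD (Lbar * Lbarᵀ) * (L i * (L i)ᵀ) * sqrtPSD (Lbar * Lbarᵀ)) := by
    classical
  have hPSDbar : (Lbar * Lbarᵀ).PosSemidef := hSbar.posSemidef
  have hsqrt_eq : sqrtPSD (Lbar * Lbarᵀ) = hPSDbar.sqrt := by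
    rw [sqrtPSD, dif_pos hPSDbar]; rfl
  set S := hPSDbar.sqrt with hSdef
  have hSS : S * S = Lbar * Lbarᵀ := hPSDbar.sqrt_mul_self
  have hSsym : Sᵀ = S := by
    have := hPSDbar.posSemidef_sqrt.isHermitian
    rwa [Matrix.IsHermitian, realCT] at this
  have hSdet : IsUnit S.det := by
    have h2 : S.det * S.det = (Lbar * Lbarᵀ).det := by rw [← Matrix.det_mul, hSS]
    refine isUnit_of_mul_isUnit_left (y := S.det) ?_
    rw [h2]; exact isUnit_iff_ne_zero.mpr (ne_of_gt hSbar.det_pos)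
  have hSinv : S * S⁻¹ = 1 := Matrix.mul_nonsing_inv _ hSdet
  have hSinv' : S⁻¹ * S = 1 := Matrix.nonsing_inv_mul _ hSdet
  have hSinvsym : (S⁻¹)ᵀ = S⁻¹ := by rw [Matrix.transpose_nonsing_inv, hSsym]
  have hLbdet : IsUnit Lbar.det := by
    refine isUnit_of_mul_isUnit_left (y := Lbar.det) ?_
    have h3 : Lbar.det * Lbar.det = (Lbar * Lbarᵀ).det := by
      rw [Matrix.det_mul, Matrix.det_transpose]
    rw [h3]; exact isUnit_iff_ne_zero.mpr (ne_of_gt hSbar.det_pos)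
  have hLdet : ∀ i, IsUnit (L i).det := by
    intro i
    refine isUnit_of_mul_isUnit_left (y := (L i).det) ?_
    have h3 : (L i).det * (L i).det = (L i * (L i)ᵀ).det := by
      rw [Matrix.det_mul, Matrix.det_transpose]
    rw [h3]; exact isUnit_iff_ne_zero.mpr (ne_of_gt (hS i).det_pos)
  have hK : ∀ i, ((L i * O i)ᵀ * Lbar).PosSemidef := fun i =>
    procrustes_psd Lbar (L i) (O i) hLbdet (hLdet i) (hO i).1 (hO i).2
  have hKsym : ∀ i, Lbarᵀ * (L i * O i) = (L i * O i)ᵀ * Lbar := by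
    intro i
    have h := (hK i).isHermitian
    rw [Matrix.IsHermitian, realCT, Matrix.transpose_mul, Matrix.transpose_transpose] at h
    exact h
  set T : Fin N → Matrix (Fin d) (Fin d) ℝ :=
    fun i => S⁻¹ * (Lbar * (L i * O i)ᵀ) * S with hT
  have hTpsd : ∀ i, (T i).PosSemidef := by
    intro i
    have h := (hK i).mul_mul_conjTranspose_same (S⁻¹ * Lbar)
    have e : S⁻¹ * Lbar * ((L i * O i)ᵀ * Lbar) * (S⁻¹ * Lbar)ᴴ = T i := by
      rw [realCT, Matrix.transpose_mul (S⁻¹) Lbar, hSinvsym, hT]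
      calc S⁻¹ * Lbar * ((L i * O i)ᵀ * Lbar) * (Lbarᵀ * S⁻¹)
          = S⁻¹ * (Lbar * ((L i * O i)ᵀ * (Lbar * (Lbarᵀ * S⁻¹)))) := by
            simp only [Matrix.mul_assoc]
        _ = S⁻¹ * (Lbar * ((L i * O i)ᵀ * ((Lbar * Lbarᵀ) * S⁻¹))) := by
            simp only [Matrix.mul_assoc]
        _ = S⁻¹ * (Lbar * ((L i * O i)ᵀ * ((S * S) * S⁻¹))) := by rw [hSS]
        _ = S⁻¹ * (Lbar * ((L i * O i)ᵀ * (S * (S * S⁻¹)))) := by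
            simp only [Matrix.mul_assoc]
        _ = S⁻¹ * (Lbar * ((L i * O i)ᵀ * S)) := by rw [hSinv, Matrix.mul_one]
        _ = S⁻¹ * (Lbar * (L i * O i)ᵀ) * S := by simp only [Matrix.mul_assoc]
    rwa [e] at h
  have hTsq : ∀ i, (T i) ^ 2 = S * (L i * (L i)ᵀ) * S := by
    intro i
    have hKK : (L i * O i) * (L i * O i)ᵀ = L i * (L i)ᵀ := by
      rw [Matrix.transpose_mul]
      calc L i * O i * ((O i)ᵀ * (L i)ᵀ) = L i * ((O i * (O i)ᵀ) * (L i)ᵀ) := by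
            simp only [Matrix.mul_assoc]
        _ = L i * (L i)ᵀ := by rw [(hO i).1.1, Matrix.one_mul]
    rw [pow_two, hT]
    calc (S⁻¹ * (Lbar * (L i * O i)ᵀ) * S) * (S⁻¹ * (Lbar * (L i * O i)ᵀ) * S)
        = S⁻¹ * (Lbar * ((L i * O i)ᵀ * ((S * S⁻¹) * (Lbar * ((L i * O i)ᵀ * S))))) := by
          simp only [Matrix.mul_assoc]
      _ = S⁻¹ * (Lbar * (((L i * O i)ᵀ * Lbar) * ((L i * O i)ᵀ * S))) := by
          rw [hSinv, Matrix.one_mul]; simp only [Matrix.mul_assoc]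
      _ = S⁻¹ * (Lbar * ((Lbarᵀ * (L i * O i)) * ((L i * O i)ᵀ * S))) := by rw [hKsym]
      _ = S⁻¹ * ((Lbar * Lbarᵀ) * (((L i * O i) * (L i * O i)ᵀ) * S)) := by
          simp only [Matrix.mul_assoc]
      _ = S⁻¹ * ((S * S) * ((L i * (L i)ᵀ) * S)) := by rw [hSS, hKK]
      _ = (S⁻¹ * S) * (S * ((L i * (L i)ᵀ) * S)) := by simp only [Matrix.mul_assoc]
      _ = S * (L i * (L i)ᵀ) * S := by
          rw [hSinv', Matrix.one_mul]; simp only [Matrix.mul_assoc]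
  have hSig : ∀ i, (S * (L i * (L i)ᵀ) * S).PosSemidef := by
    intro i
    have h := (hS i).posSemidef.mul_mul_conjTranspose_same S
    rwa [realCT, hSsym] at h
  have hsqrtT : ∀ i, sqrtPSD (S * (L i * (L i)ᵀ) * S) = T i := by
    intro i
    rw [sqrtPSD, dif_pos (hSig i)]
    exact ((hTpsd i).eq_sqrt_of_sq_eq (hSig i) (hTsq i)).symm
  rw [hsqrt_eq]
  simp only [hsqrtT]
  have e1 : ∀ i, lam i • T i = S⁻¹ * (Lbar * (lam i • (L i * O i))ᵀ) * S := by
    intro i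
    simp only [hT, Matrix.transpose_smul, mul_smul_comm, smul_mul_assoc]
  rw [Finset.sum_congr rfl (fun i _ => e1 i)]
  have e2 : ∑ i, S⁻¹ * (Lbar * (lam i • (L i * O i))ᵀ) * S
      = S⁻¹ * (Lbar * (∑ i, lam i • (L i * O i))ᵀ) * S := by
    simp only [Matrix.transpose_sum, Finset.mul_sum, Finset.sum_mul]
  rw [e2, ← hfix]
  symm
  calc S⁻¹ * (Lbar * Lbarᵀ) * S = S⁻¹ * (S * S) * S := by rw [hSS]
    _ = (S⁻¹ * S) * (S * S) := by simp only [Matrix.mul_assoc]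
    _ = Lbar * Lbarᵀ := by rw [hSinv', Matrix.one_mul, hSS]
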